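/- Let B be a left brace and let I be an ideal of B. If I (with the induced operations) is a solvable left brace, and there exists a positive integer k such that d_k(B) ⊆ I (this condition expresses that the quotient left brace B/I is solvable), then B is a solvable left brace. -/
import Mathlib


/-- A sub-brace of a left brace `B`. -/
def IsSubBrace {B : Type*} [AddCommGroup B] [Group B] (H : Set B) : Prop :=
  (0 : B) ∈ H ∧ (∀ x ∈ H, ∀ y ∈ H, x + y ∈ H) ∧ (∀ x ∈ H, -x ∈ H) ∧
    (∀ x ∈ H, ∀ y ∈ H, x * y ∈ H) ∧ (∀ x ∈ H, x⁻¹ ∈ H)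

/-- An ideal of a left brace `B`: a normal subgroup `N` of `(B,·)` such that
`λ_b(N) ⊆ N` for all `b ∈ B`, where `λ_b(x) = b·x − b`. -/
def IsIdeal {B : Type*} [AddCommGroup B] [Group B] (N : Set B) : Prop :=
  (1 : B) ∈ N ∧ (∀ x ∈ N, ∀ y ∈ N, x * y ∈ N) ∧ (∀ x ∈ N, x⁻¹ ∈ N) ∧
    (∀ g : B, ∀ x ∈ N, g * x * g⁻¹ ∈ N) ∧ (∀ b : B, ∀ x ∈ N, b * x - b ∈ N)

/-- `IsSolvableIn S`: the sub-brace `S` of `B` is a solvable left brace (chain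
`{0} = C 0 ⊆ ⋯ ⊆ C m = S`, each `C i` an ideal of `C (i+1)` with trivial quotient). -/
def IsSolvableIn {B : Type*} [AddCommGroup B] [Group B] (S : Set B) : Prop :=
  ∃ (m : ℕ) (C : ℕ → Set B),
    C 0 = {(0 : B)} ∧ C m = S ∧ (∀ i ≤ m, IsSubBrace (C i)) ∧
    ∀ i < m,
      C i ⊆ C (i + 1) ∧
      (∀ x ∈ C (i + 1), ∀ y ∈ C i, x * y * x⁻¹ ∈ C i) ∧
      (∀ x ∈ C (i + 1), ∀ y ∈ C i, x * y - x ∈ C i) ∧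
      (∀ x ∈ C (i + 1), ∀ y ∈ C (i + 1), x * y - x - y ∈ C i)

/-- The additive subgroup of `B` generated by all `x*y := x·y − x − y`, `x ∈ X`, `y ∈ Y`. -/
def starSpan (B : Type*) [AddCommGroup B] [Group B] (X Y : Set B) : AddSubgroup B :=
  AddSubgroup.closure {z : B | ∃ x ∈ X, ∃ y ∈ Y, z = x * y - x - y}

/-- `dSeries B k` corresponds to `d_{k+1}(B)`: `d_1(B) = B*B`, `d_{i+1}(B) = d_i(B)*d_i(B)`. -/
def dSeries (B : Type*) [AddCommGroup B] [Group B] : ℕ → AddSubgroup B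
  | 0 => starSpan B Set.univ Set.univ
  | k + 1 => starSpan B (dSeries B k) (dSeries B k)


namespace BraceAux
variable {B : Type*} [AddCommGroup B] [Group B]

theorem one_eq_zero (hB : ∀ a b c : B, a * (b + c) + a = a * b + a * c) :
    (1 : B) = 0 := by
  have h := hB 1 0 0
  simpa using h

theorem mul_add' (hB : ∀ a b c : B, a * (b + c) + a = a * b + a * c) (a b c : B) :
    a * (b + c) = a * b + a * c - a :=
  eq_sub_of_add_eq (hB a b c)

theorem mul_zero' (hB : ∀ a b c : B, a * (b + c) + a = a * b + a * c) (a : B) :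
    a * (0 : B) = a := by
  have h := hB a 0 0
  rw [add_zero] at h
  exact (add_left_cancel h).symm

/-- The lambda map `b ↦ a*b - a` as an additive hom. -/
def lamHom (hB : ∀ a b c : B, a * (b + c) + a = a * b + a * c) (a : B) : B →+ B :=
  AddMonoidHom.mk' (fun b => a * b - a) (by
    intro b c
    show a * (b + c) - a = (a * b - a) + (a * c - a)
    rw [mul_add' hB]
    abel)

theorem lam_apply (hB : ∀ a b c : B, a * (b + c) + a = a * b + a * c) (a b : B) :
    lamHom hB a b = a * b - a := rfl


variable (hB : ∀ a b c : B, a * (b + c) + a = a * b + a * c)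
include hB

theorem lam_lam (a b c : B) : a * (b * c - b) - a = a * b * c - a * b := by
  have h := map_sub (lamHom hB a) (b * c) b
  rw [lam_apply, lam_apply, lam_apply] at h
  rw [h, ← mul_assoc]
  abel

/-- `u⁻¹ * x = λ_{u⁻¹}(x - u)`. -/
theorem inv_transport (u x : B) : u⁻¹ * (x - u) - u⁻¹ = u⁻¹ * x := by
  have h := map_sub (lamHom hB u⁻¹) x u
  rw [lam_apply, lam_apply, lam_apply] at h
  rw [h, inv_mul_cancel, one_eq_zero hB]
  abel

/-- `x⁻¹ = λ_{x⁻¹}(-x)`. -/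
theorem inv_formula (x : B) : x⁻¹ * (-x) - x⁻¹ = x⁻¹ := by
  have h := map_neg (lamHom hB x⁻¹) x
  rw [lam_apply, lam_apply] at h
  rw [h, inv_mul_cancel, one_eq_zero hB]
  abel

/-- conjugation identity: `u v u⁻¹ = λ_u(v) + λ_u(v ⋆ u⁻¹)`. -/
theorem conj_identity (u v : B) :
    u * v * u⁻¹ = (u * v - u) + (u * (v * u⁻¹ - v - u⁻¹) - u) := by
  have h1 := map_sub (lamHom hB u) (v * u⁻¹ - v) u⁻¹
  have h2 := map_sub (lamHom hB u) (v * u⁻¹) v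
  rw [lam_apply, lam_apply, lam_apply] at h1 h2
  rw [h1, h2, ← mul_assoc, mul_inv_cancel, one_eq_zero hB]
  abel


section Ideal
variable {I : Set B} (hI : IsIdeal I)
include hI

theorem I_zero : (0 : B) ∈ I := by rw [← one_eq_zero hB]; exact hI.1

omit hB in
theorem I_lam (b : B) {x : B} (hx : x ∈ I) : b * x - b ∈ I := hI.2.2.2.2 b x hx

theorem I_neg {a : B} (ha : a ∈ I) : -a ∈ I := by
  have h := hI.2.2.2.2 a a⁻¹ (hI.2.2.1 a ha)
  rwa [mul_inv_cancel, one_eq_zero hB, zero_sub] at h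

theorem I_add {a b : B} (ha : a ∈ I) (hb : b ∈ I) : a + b ∈ I := by
  have h1 : a⁻¹ * (a + b) ∈ I := by
    rw [← inv_transport hB a (a + b), add_sub_cancel_left]
    exact hI.2.2.2.2 a⁻¹ b hb
  have h2 := hI.2.1 a ha _ h1
  rwa [mul_inv_cancel_left] at h2

theorem I_sub {a b : B} (ha : a ∈ I) (hb : b ∈ I) : a - b ∈ I := by
  rw [sub_eq_add_neg]; exact I_add hB hI ha (I_neg hB hI hb)

theorem cong_mp {x u : B} (h : x - u ∈ I) : u⁻¹ * x ∈ I := by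
  rw [← inv_transport hB u x]
  exact hI.2.2.2.2 u⁻¹ _ h

omit hB in
theorem cong_mpr {x u : B} (h : u⁻¹ * x ∈ I) : x - u ∈ I := by
  have h2 := hI.2.2.2.2 u _ h
  rwa [mul_inv_cancel_left] at h2

theorem mul_cong {x u y v : B} (h1 : x - u ∈ I) (h2 : y - v ∈ I) :
    x * y - u * v ∈ I := by
  apply cong_mpr hI
  have hc : u⁻¹ * x ∈ I := cong_mp hB hI h1
  have hd : v⁻¹ * y ∈ I := cong_mp hB hI h2
  have hconj : v⁻¹ * (u⁻¹ * x) * v ∈ I := by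
    have := hI.2.2.2.1 v⁻¹ _ hc
    rwa [inv_inv] at this
  have := hI.2.1 _ hconj _ hd
  have e : v⁻¹ * (u⁻¹ * x) * v * (v⁻¹ * y) = (u * v)⁻¹ * (x * y) := by
    rw [mul_inv_rev]; group
  rwa [e] at this

theorem inv_cong {x u : B} (h : x - u ∈ I) : x⁻¹ - u⁻¹ ∈ I := by
  apply cong_mpr hI
  rw [inv_inv]
  have hc : u⁻¹ * x ∈ I := cong_mp hB hI h
  have h1 : u * (u⁻¹ * x) * u⁻¹ ∈ I := hI.2.2.2.1 u _ hc
  have h2 := hI.2.2.1 _ h1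
  have e : (u * (u⁻¹ * x) * u⁻¹)⁻¹ = u * x⁻¹ := by group
  rwa [e] at h2

theorem star_cong {x u y v : B} (h1 : x - u ∈ I) (h2 : y - v ∈ I) :
    (x * y - x - y) - (u * v - u - v) ∈ I := by
  have h3 := mul_cong hB hI h1 h2
  have e : (x * y - x - y) - (u * v - u - v)
      = (x * y - u * v) - (x - u) - (y - v) := by abel
  rw [e]
  exact I_sub hB hI (I_sub hB hI h3 h1) h2

end Ideal

section DSeries

omit hB in
theorem star_mem_starSpan {S : Set B} {a b : B} (ha : a ∈ S) (hb : b ∈ S) :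
    a * b - a - b ∈ starSpan B S S :=
  AddSubgroup.subset_closure ⟨a, ha, b, hb, rfl⟩

theorem lam_star (g a b : B) :
    g * (a * b - a - b) - g
      = ((g * a) * b - (g * a) - b) - (g * b - g - b) := by
  have h1 := map_sub (lamHom hB g) (a * b - a) b
  have h2 := map_sub (lamHom hB g) (a * b) a
  rw [lam_apply, lam_apply, lam_apply] at h1 h2
  rw [h1, h2, ← mul_assoc]
  abel

/-- λ-invariance of `starSpan S S` under `λ_g` for `g ∈ S` (when `S` is
multiplicatively closed). -/
theorem lam_starSpan {S : Set B} (hSmul : ∀ x ∈ S, ∀ y ∈ S, x * y ∈ S)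
    {g : B} (hg : g ∈ S) {x : B} (hx : x ∈ starSpan B S S) :
    g * x - g ∈ starSpan B S S := by
  have hle : starSpan B S S ≤ (starSpan B S S).comap (lamHom hB g) := by
    apply (AddSubgroup.closure_le _).mpr
    rintro z ⟨a, ha, b, hb, rfl⟩
    simp only [SetLike.mem_coe, AddSubgroup.mem_comap]
    rw [lam_apply, lam_star hB]
    exact sub_mem (star_mem_starSpan (hSmul g hg a ha) hb)
      (star_mem_starSpan hg hb)
  exact hle hx

end DSeries

end BraceAux

/-- `dPred B t`: the "parent" set of `dSeries B t`, so that
`dSeries B t = starSpan B (dPred B t) (dPred B t)`. -/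
def dPred (B : Type*) [AddCommGroup B] [Group B] : ℕ → Set B
  | 0 => Set.univ
  | t + 1 => (dSeries B t : Set B)

namespace BraceAux2
open BraceAux
variable {B : Type*} [AddCommGroup B] [Group B]
variable (hB : ∀ a b c : B, a * (b + c) + a = a * b + a * c)

theorem dSeries_eq (t : ℕ) : dSeries B t = starSpan B (dPred B t) (dPred B t) := by
  cases t <;> rfl

theorem dPred_zero_mem (t : ℕ) : (0 : B) ∈ dPred B t := by
  cases t
  · trivial
  · exact (dSeries B _).zero_mem

theorem dPred_add {t : ℕ} {a b : B} (ha : a ∈ dPred B t) (hb : b ∈ dPred B t) :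
    a + b ∈ dPred B t := by
  cases t
  · trivial
  · exact (dSeries B _).add_mem ha hb

theorem dPred_neg {t : ℕ} {a : B} (ha : a ∈ dPred B t) : -a ∈ dPred B t := by
  cases t
  · trivial
  · exact (dSeries B _).neg_mem ha

theorem star_mem_dSeries {t : ℕ} {a b : B} (ha : a ∈ dPred B t) (hb : b ∈ dPred B t) :
    a * b - a - b ∈ dSeries B t := by
  rw [dSeries_eq]
  exact star_mem_starSpan ha hb

include hB

theorem dFacts (t : ℕ) :
    (∀ x ∈ dPred B t, ∀ y ∈ dPred B t, x * y ∈ dPred B t) ∧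
    (∀ x ∈ dPred B t, x⁻¹ ∈ dPred B t) ∧
    (∀ g ∈ dPred B t, ∀ x : B, x ∈ dSeries B t → g * x - g ∈ dSeries B t) ∧
    (∀ x : B, x ∈ dSeries B t → x ∈ dPred B t) := by
  induction t with
  | zero =>
    refine ⟨fun _ _ _ _ => Set.mem_univ _, fun _ _ => Set.mem_univ _, ?_, fun _ _ => Set.mem_univ _⟩
    intro g _ x hx
    rw [dSeries_eq] at hx ⊢
    exact lam_starSpan hB (fun _ _ _ _ => Set.mem_univ _) (Set.mem_univ _) hx
  | succ t ih =>
    obtain ⟨ihmul, ihinv, ihlam, ihsub⟩ := ih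
    have hmul : ∀ x ∈ dPred B (t + 1), ∀ y ∈ dPred B (t + 1),
        x * y ∈ dPred B (t + 1) := by
      intro x hx y hy
      have h1 : x * y - x ∈ dSeries B t := ihlam x (ihsub x hx) y hy
      have : x + (x * y - x) ∈ dSeries B t := (dSeries B t).add_mem hx h1
      rwa [add_sub_cancel] at this
    have hinv : ∀ x ∈ dPred B (t + 1), x⁻¹ ∈ dPred B (t + 1) := by
      intro x hx
      have hx' : x⁻¹ ∈ dPred B t := ihinv x (ihsub x hx)
      have h1 : x⁻¹ * (-x) - x⁻¹ ∈ dSeries B t :=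
        ihlam x⁻¹ hx' (-x) ((dSeries B t).neg_mem hx)
      rwa [inv_formula hB] at h1
    refine ⟨hmul, hinv, ?_, ?_⟩
    · intro g hg x hx
      have e : dSeries B (t + 1) = starSpan B (dSeries B t) (dSeries B t) := rfl
      rw [e] at hx ⊢
      exact lam_starSpan hB hmul hg hx
    · intro x hx
      have hle : dSeries B (t + 1) ≤ dSeries B t := by
        apply (AddSubgroup.closure_le _).mpr
        rintro z ⟨a, ha, b, hb, rfl⟩
        exact star_mem_dSeries (ihsub a ha) (ihsub b hb)
      exact hle hx

theorem conj_dSeries {t : ℕ} {u v : B} (hu : u ∈ dPred B t) (hv : v ∈ dSeries B t) :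
    u * v * u⁻¹ ∈ dSeries B t := by
  obtain ⟨hmul, hinv, hlam, hsub⟩ := dFacts hB (B := B) t
  have hv' : v ∈ dPred B t := hsub v hv
  have hu' : u⁻¹ ∈ dPred B t := hinv u hu
  have hw : v * u⁻¹ - v - u⁻¹ ∈ dSeries B t := star_mem_dSeries hv' hu'
  have h1 : u * v - u ∈ dSeries B t := hlam u hu v hv
  have h2 : u * (v * u⁻¹ - v - u⁻¹) - u ∈ dSeries B t := hlam u hu _ hw
  rw [conj_identity hB]
  exact (dSeries B t).add_mem h1 h2

end BraceAux2

/-- `ESet I t = I + dPred B t` (elements congruent mod `I` to an element of `dPred B t`). -/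
def ESet {B : Type*} [AddCommGroup B] [Group B] (I : Set B) (t : ℕ) : Set B :=
  {x : B | ∃ u ∈ dPred B t, x - u ∈ I}

namespace BraceAux3
open BraceAux BraceAux2
variable {B : Type*} [AddCommGroup B] [Group B]
variable (hB : ∀ a b c : B, a * (b + c) + a = a * b + a * c)
variable {I : Set B} (hI : IsIdeal I)
include hB hI

theorem ESet_subbrace (t : ℕ) : IsSubBrace (ESet I t) := by
  obtain ⟨hmul, hinv, hlam, hsub⟩ := dFacts hB (B := B) t
  refine ⟨⟨0, dPred_zero_mem t, by simpa using I_zero hB hI⟩, ?_, ?_, ?_, ?_⟩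
  · rintro x ⟨u, hu, hxu⟩ y ⟨v, hv, hyv⟩
    exact ⟨u + v, dPred_add hu hv, by
      have e : x + y - (u + v) = (x - u) + (y - v) := by abel
      rw [e]; exact I_add hB hI hxu hyv⟩
  · rintro x ⟨u, hu, hxu⟩
    exact ⟨-u, dPred_neg hu, by
      have e : -x - -u = -(x - u) := by abel
      rw [e]; exact I_neg hB hI hxu⟩
  · rintro x ⟨u, hu, hxu⟩ y ⟨v, hv, hyv⟩
    exact ⟨u * v, hmul u hu v hv, mul_cong hB hI hxu hyv⟩
  · rintro x ⟨u, hu, hxu⟩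
    exact ⟨u⁻¹, hinv u hu, inv_cong hB hI hxu⟩

theorem ESet_subset (t : ℕ) : ESet I (t + 1) ⊆ ESet I t := by
  obtain ⟨hmul, hinv, hlam, hsub⟩ := dFacts hB (B := B) t
  rintro x ⟨u, hu, hxu⟩
  exact ⟨u, hsub u hu, hxu⟩

theorem ESet_conj (t : ℕ) {x y : B} (hx : x ∈ ESet I t) (hy : y ∈ ESet I (t + 1)) :
    x * y * x⁻¹ ∈ ESet I (t + 1) := by
  obtain ⟨u, hu, hxu⟩ := hx
  obtain ⟨v, hv, hyv⟩ := hy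
  have hv' : v ∈ dSeries B t := hv
  refine ⟨u * v * u⁻¹, ?_, ?_⟩
  · exact conj_dSeries hB hu hv'
  · exact mul_cong hB hI (mul_cong hB hI hxu hyv) (inv_cong hB hI hxu)

theorem ESet_lam (t : ℕ) {x y : B} (hx : x ∈ ESet I t) (hy : y ∈ ESet I (t + 1)) :
    x * y - x ∈ ESet I (t + 1) := by
  obtain ⟨hmul, hinv, hlam, hsub⟩ := dFacts hB (B := B) t
  obtain ⟨u, hu, hxu⟩ := hx
  obtain ⟨v, hv, hyv⟩ := hy
  have hv' : v ∈ dSeries B t := hv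
  set c := u⁻¹ * x with hc
  have hcI : c ∈ I := cong_mp hB hI hxu
  have hxuc : x = u * c := (mul_inv_cancel_left u x).symm
  set w := c * v - c - v with hw
  have hwI : w ∈ I := by
    have h1 : v⁻¹ * (c * v) ∈ I := by
      have := hI.2.2.2.1 v⁻¹ c hcI
      rwa [inv_inv, mul_assoc] at this
    have h2 : c * v - v ∈ I := cong_mpr hI h1
    have e : w = (c * v - v) - c := by rw [hw]; abel
    rw [e]; exact I_sub hB hI h2 hcI
  refine ⟨u * v - u, hlam u hu v hv', ?_⟩
  have e1 : x * y - x = (x * (y - v) - x) + (x * v - x) := by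
    have h := map_add (lamHom hB x) (y - v) v
    rw [lam_apply, lam_apply, lam_apply, sub_add_cancel] at h
    exact h
  have e2 : x * v - x = (u * v - u) + (u * w - u) := by
    have h3 : u * (c * v - c) - u = u * c * v - u * c := lam_lam hB u c v
    have h4 : c * v - c = v + w := by rw [hw]; abel
    have h5 := map_add (lamHom hB u) v w
    rw [lam_apply, lam_apply, lam_apply] at h5
    rw [hxuc, ← h3, h4, h5]
  have e3 : (x * y - x) - (u * v - u) = (x * (y - v) - x) + (u * w - u) := by
    rw [e1, e2]; abel
  rw [e3]
  exact I_add hB hI (I_lam hI x hyv) (I_lam hI u hwI)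

theorem ESet_star (t : ℕ) {x y : B} (hx : x ∈ ESet I t) (hy : y ∈ ESet I t) :
    x * y - x - y ∈ ESet I (t + 1) := by
  obtain ⟨u, hu, hxu⟩ := hx
  obtain ⟨v, hv, hyv⟩ := hy
  refine ⟨u * v - u - v, star_mem_dSeries hu hv, star_cong hB hI hxu hyv⟩

end BraceAux3

/-- if `I` is an ideal of the left brace `B`, `I` is a solvable left brace,
and `d_k(B) ⊆ I` for some positive integer `k` (expressing that `B/I` is solvable),
then `B` is a solvable left brace. -/
theorem solvable_of_ideal_solvable (B : Type*) [AddCommGroup B] [Group B]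
    (hB : ∀ a b c : B, a * (b + c) + a = a * b + a * c)
    (I : Set B) (hI : IsIdeal I) (hIsolv : IsSolvableIn I)
    (k : ℕ) (hk : (dSeries B k : Set B) ⊆ I) :
    IsSolvableIn (Set.univ : Set B) := by
  classical
  open BraceAux BraceAux2 BraceAux3 in
  obtain ⟨m, C, hC0, hCm, hsubb, hstep⟩ := hIsolv
  refine ⟨m + k + 2, fun i => if i ≤ m then C i else ESet I (m + k + 2 - i),
    ?_, ?_, ?_, ?_⟩
  · beta_reduce
    rw [if_pos (Nat.zero_le m)]; exact hC0
  · beta_reduce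
    rw [if_neg (show ¬ m + k + 2 ≤ m by omega)]
    have e : m + k + 2 - (m + k + 2) = 0 := by omega
    rw [e]
    apply Set.eq_univ_of_forall
    intro x
    exact ⟨x, Set.mem_univ x, by simpa using I_zero hB hI⟩
  · intro i _
    beta_reduce
    by_cases h : i ≤ m
    · rw [if_pos h]; exact hsubb i h
    · rw [if_neg h]; exact ESet_subbrace hB hI _
  · intro i hi
    beta_reduce
    by_cases h1 : i + 1 ≤ m
    · have h0 : i ≤ m := by omega
      simp only [if_pos h0, if_pos h1]
      exact hstep i (by omega)
    · by_cases h2 : i ≤ m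
      · -- junction: i = m
        have him : i = m := by omega
        rw [him]
        rw [if_pos (le_refl m), if_neg (show ¬ m + 1 ≤ m by omega)]
        have e : m + k + 2 - (m + 1) = k + 1 := by omega
        rw [e, hCm]
        have hEI : ∀ x ∈ ESet I (k + 1), x ∈ I := by
          rintro x ⟨v, hv, hxv⟩
          have hvI : v ∈ I := hk hv
          have h := I_add hB hI hxv hvI
          rwa [sub_add_cancel] at h
        refine ⟨?_, ?_, ?_, ?_⟩
        · intro x hx
          exact ⟨0, (dSeries B k).zero_mem, by simpa using hx⟩
        · intro x hx y hy
          exact hI.2.1 _ (hI.2.1 x (hEI x hx) y hy) _ (hI.2.2.1 x (hEI x hx))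
        · intro x _ y hy
          exact I_lam hI x hy
        · intro x hx y hy
          exact I_sub hB hI (I_sub hB hI
            (hI.2.1 x (hEI x hx) y (hEI y hy)) (hEI x hx)) (hEI y hy)
      · -- pure ESet step
        simp only [if_neg h2, if_neg h1]
        have e : m + k + 2 - i = (m + k + 2 - (i + 1)) + 1 := by omega
        rw [e]
        exact ⟨ESet_subset hB hI _, fun x hx y hy => ESet_conj hB hI _ hx hy,
          fun x hx y hy => ESet_lam hB hI _ hx hy,
          fun x hx y hy => ESet_star hB hI _ hx hy⟩
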